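/- Let G be a finite non-bipartite graph, and let i, n, s be positive integers with i·s = n − 1. Then χ_n(G^{1/(2s+1)}) ≤ 2n + i if and only if χ(G) ≤ C(2n+i, n), where C(2n+i, n) is the binomial coefficient. -/

import Mathlib

open SimpleGraph

/-- The subdivision `G^{1/k}`: every edge of `G` is replaced by a path of length `k`.
An interior point at distance `i` from `u` and `k - i` from `v` along the edge `uv`
(`0 < i < k`) is recorded as the unordered pair `{(u, i), (v, k - i)}`. -/
def subdiv {V : Type*} (G : SimpleGraph V) (k : ℕ) :
    SimpleGraph (V ⊕ {p : Sym2 (V × ℕ) //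
      ∃ u v i, G.Adj u v ∧ 0 < i ∧ i < k ∧ p = Sym2.mk (u, i) (v, k - i)}) :=
  SimpleGraph.fromRel fun x y =>
    match x, y with
    | Sum.inl a, Sum.inl b => k = 1 ∧ G.Adj a b
    | Sum.inl a, Sum.inr p => ∃ v, G.Adj a v ∧ p.1 = Sym2.mk (a, 1) (v, k - 1)
    | Sum.inr _, Sum.inl _ => False
    | Sum.inr p, Sum.inr q => ∃ u v i, G.Adj u v ∧ 0 < i ∧ i + 1 < k ∧
        p.1 = Sym2.mk (u, i) (v, k - i) ∧ q.1 = Sym2.mk (u, i + 1) (v, k - i - 1)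

/-- The Kneser graph `KG(m, n)`: vertices are the `n`-element subsets of an `m`-set,
adjacent iff disjoint. -/
def kneserG (m n : ℕ) : SimpleGraph {A : Finset (Fin m) // A.card = n} :=
  SimpleGraph.fromRel fun A B => Disjoint A.1 B.1

/-- The `n`-th multichromatic number: the least `m` such that `G` admits a homomorphism
to the Kneser graph `KG(m, n)`. -/
noncomputable def multiChrom {V : Type*} (G : SimpleGraph V) (n : ℕ) : ℕ :=
  sInf {m : ℕ | Nonempty (G →g kneserG m n)}

lemma kneser_adj_iff {m n : ℕ} (A B : {A : Finset (Fin m) // A.card = n}) :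
    (kneserG m n).Adj A B ↔ A ≠ B ∧ Disjoint A.1 B.1 := by
  unfold kneserG
  rw [fromRel_adj]
  constructor
  · rintro ⟨h1, h2 | h2⟩
    exacts [⟨h1, h2⟩, ⟨h1, h2.symm⟩]
  · rintro ⟨h1, h2⟩; exact ⟨h1, Or.inl h2⟩
lemma adj_of_disjoint {m n : ℕ} (hn : 0 < n) {A B : {A : Finset (Fin m) // A.card = n}}
    (h : Disjoint A.1 B.1) : (kneserG m n).Adj A B := by
  refine (kneser_adj_iff A B).2 ⟨?_, h⟩
  rintro rfl
  rw [disjoint_self] at h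
  have h2 := A.2
  rw [h] at h2
  simp at h2
  omega
lemma walk_exists (m n : ℕ) (hn : 0 < n) (hm : 2*n ≤ m) (s : ℕ)
    (A B : Finset (Fin m)) (hA : A.card = n) (hB : B.card = n)
    (hAB : (A ∩ B).card ≤ (m - 2*n) * s) :
    ∃ W : ℕ → Finset (Fin m), (∀ j, (W j).card = n) ∧ W 0 = A ∧ W (2*s+1) = B ∧
      ∀ j < 2*s+1, Disjoint (W j) (W (j+1)) := by
  induction s generalizing A with
  | zero =>
    have hd : Disjoint A B := by
      rw [Finset.disjoint_iff_inter_eq_empty, ← Finset.card_eq_zero]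
      omega
    refine ⟨fun j => if j = 0 then A else B, ?_, by simp, by norm_num, ?_⟩
    · intro j; by_cases h : j = 0 <;> simp [h, hA, hB]
    · intro j hj
      interval_cases j
      simpa using hd
  | succ s ih =>
    set i := m - 2*n with hidef
    set t := (A ∩ B).card with ht
    obtain ⟨D, hD, hDcard⟩ := Finset.exists_subset_card_eq (s := A ∩ B) (n := min i t)
      (min_le_right i t)
    have hcompl : min i t ≤ ((A ∪ B)ᶜ).card := by
      have h1 : (A ∪ B).card + t = 2 * n := by
        rw [ht, Finset.card_union_add_card_inter, hA, hB]; omega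
      have h2 : ((A ∪ B)ᶜ).card = m - (A ∪ B).card := by
        rw [Finset.card_compl]; simp
      omega
    obtain ⟨F, hF, hFcard⟩ := Finset.exists_subset_card_eq hcompl
    have hDA : D ⊆ A := hD.trans Finset.inter_subset_left
    have hFA : Disjoint F A := by
      refine Finset.disjoint_left.2 fun x hx hxA => ?_
      have := hF hx
      simp [Finset.mem_compl] at this
      exact this.1 hxA
    have hFB : Disjoint F B := by
      refine Finset.disjoint_left.2 fun x hx hxB => ?_
      have := hF hx
      simp [Finset.mem_compl] at this
      exact this.2 hxB
    set A' := (A \ D) ∪ F with hA'def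
    have htn : t ≤ n := by
      rw [ht, ← hA]; exact Finset.card_le_card Finset.inter_subset_left
    have hdisjADF : Disjoint (A \ D) F := hFA.symm.mono_left Finset.sdiff_subset
    have hA'card : A'.card = n := by
      rw [hA'def, Finset.card_union_of_disjoint hdisjADF, Finset.card_sdiff_of_subset hDA, hA, hDcard]
      have : min i t ≤ n := le_trans (min_le_right _ _) htn
      omega
    have hA'B : A' ∩ B = (A ∩ B) \ D := by
      ext x
      simp only [hA'def, Finset.mem_inter, Finset.mem_union, Finset.mem_sdiff]
      constructor
      · rintro ⟨hx1 | hx1, hx2⟩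
        · exact ⟨⟨hx1.1, hx2⟩, hx1.2⟩
        · exact absurd hx2 (Finset.disjoint_left.1 hFB hx1)
      · rintro ⟨⟨hx1, hx2⟩, hx3⟩
        exact ⟨Or.inl ⟨hx1, hx3⟩, hx2⟩
    have hA'Bcard : (A' ∩ B).card ≤ i * s := by
      rw [hA'B, Finset.card_sdiff_of_subset hD, hDcard, ← ht]
      rcases le_total i t with hit | hit
      · rw [min_eq_left hit]
        have h1 : t ≤ i * (s + 1) := hAB
        have h2 : i * (s + 1) = i * s + i := by ring
        omega
      · rw [min_eq_right hit]; omega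
    -- find the separator E
    have hAA' : A ∪ A' = A ∪ F := by
      ext x
      simp only [hA'def, Finset.mem_union, Finset.mem_sdiff]
      tauto
    have hAA'card : (A ∪ A').card ≤ n + min i t := by
      rw [hAA']
      calc (A ∪ F).card ≤ A.card + F.card := Finset.card_union_le _ _
        _ = n + min i t := by rw [hA, hFcard]
    have hEcompl : n ≤ ((A ∪ A')ᶜ).card := by
      have h2 : ((A ∪ A')ᶜ).card = m - (A ∪ A').card := by
        rw [Finset.card_compl]; simp
      have : min i t ≤ i := min_le_left _ _
      omega
    obtain ⟨E, hE, hEcard⟩ := Finset.exists_subset_card_eq hEcompl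
    have hEA : Disjoint E A := by
      refine Finset.disjoint_left.2 fun x hx hxA => ?_
      have := hE hx
      simp [Finset.mem_compl] at this
      exact this.1 hxA
    have hEA' : Disjoint E A' := by
      refine Finset.disjoint_left.2 fun x hx hxA => ?_
      have := hE hx
      simp [Finset.mem_compl] at this
      exact this.2 hxA
    obtain ⟨W', hW'card, hW'0, hW'end, hW'dis⟩ := ih A' hA'card hA'Bcard
    refine ⟨fun j => match j with
      | 0 => A
      | 1 => E
      | (j+2) => W' j, ?_, rfl, ?_, ?_⟩
    · intro j
      match j with
      | 0 => exact hA
      | 1 => exact hEcard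
      | (j+2) => exact hW'card j
    · show W' (2*(s+1)+1-2) = B
      have : 2*(s+1)+1-2 = 2*s+1 := by omega
      rw [this, hW'end]
    · intro j hj
      match j with
      | 0 => exact hEA.symm
      | 1 => rw [← hW'0] at hEA'; exact hEA'
      | (j+2) =>
        show Disjoint (W' j) (W' (j+1))
        exact hW'dis j (by omega)
lemma no_closed_walk (n i s : ℕ) (hn : 0 < n) (h : i * s = n - 1)
    (W : ℕ → Finset (Fin (2*n+i))) (hcard : ∀ j, (W j).card = n)
    (hdis : ∀ j < 2*s+1, Disjoint (W j) (W (j+1)))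
    (hcl : W (2*s+1) = W 0) : False := by
  have key : ∀ j ≤ s, (W (2*j) \ W 0).card ≤ j * i := by
    intro j hj
    induction j with
    | zero => simp
    | succ j ihj =>
      have ih := ihj (by omega)
      -- step bound
      have hstep : (W (2*j+2) \ W (2*j)).card ≤ i := by
        have hsub : W (2*j) ∪ W (2*j+2) ⊆ (W (2*j+1))ᶜ := by
          intro x hx
          rw [Finset.mem_compl]
          rcases Finset.mem_union.1 hx with h1 | h1
          · exact fun hx1 => (Finset.disjoint_left.1 (hdis (2*j) (by omega)) h1) hx1
          · exact fun hx1 => (Finset.disjoint_right.1 (hdis (2*j+1) (by omega)) h1) hx1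
        have hcu : (W (2*j) ∪ W (2*j+2)).card ≤ n + i := by
          have h1 := Finset.card_le_card hsub
          rw [Finset.card_compl, hcard, Fintype.card_fin] at h1
          omega
        have := Finset.card_sdiff_add_card (W (2*j+2)) (W (2*j))
        rw [hcard] at this
        rw [Finset.union_comm] at hcu
        omega
      have htri : W (2*(j+1)) \ W 0 ⊆ (W (2*j+2) \ W (2*j)) ∪ (W (2*j) \ W 0) := by
        have : 2*(j+1) = 2*j+2 := by omega
        rw [this]
        intro x hx
        simp only [Finset.mem_sdiff, Finset.mem_union] at hx ⊢
        by_cases hxj : x ∈ W (2*j)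
        · exact Or.inr ⟨hxj, hx.2⟩
        · exact Or.inl ⟨hx.1, hxj⟩
      calc (W (2*(j+1)) \ W 0).card ≤ ((W (2*j+2) \ W (2*j)) ∪ (W (2*j) \ W 0)).card :=
            Finset.card_le_card htri
        _ ≤ (W (2*j+2) \ W (2*j)).card + (W (2*j) \ W 0).card := Finset.card_union_le _ _
        _ ≤ i + j * i := by omega
        _ = (j+1) * i := by ring
  have hlast := key s le_rfl
  have hdisj : Disjoint (W (2*s)) (W 0) := by
    have := hdis (2*s) (by omega)
    rw [hcl] at this
    exact this
  have : W (2*s) \ W 0 = W (2*s) := Finset.sdiff_eq_self_of_disjoint hdisj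
  rw [this, hcard] at hlast
  have : s * i = i * s := by ring
  omega
lemma choose_lb (n : ℕ) (hn : 0 < n) : ∀ j, j + 1 ≤ (2*n + j).choose n := by
  intro j
  induction j with
  | zero => exact Nat.choose_pos (by omega : n ≤ 2*n + 0)
  | succ j ih =>
    obtain ⟨k, rfl⟩ : ∃ k, n = k + 1 := ⟨n - 1, by omega⟩
    have hp : (2*(k+1)+j+1).choose (k+1) = (2*(k+1)+j).choose k + (2*(k+1)+j).choose (k+1) :=
      Nat.choose_succ_succ _ _
    have h1 : 0 < (2*(k+1)+j).choose k := Nat.choose_pos (by omega)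
    have : 2*(k+1) + (j+1) = 2*(k+1)+j+1 := by omega
    rw [this, hp]
    have : (2*(k+1)+j).choose (k+1) ≥ j + 1 := ih
    omega
lemma hom_of_colors {V : Type*} (G : SimpleGraph V) (m n s : ℕ) (hn : 0 < n) (hs : 0 < s)
    (c : V → {A : Finset (Fin m) // A.card = n})
    (hc : ∀ u v, G.Adj u v → c u ≠ c v)
    (hwalk : ∀ A B : {A : Finset (Fin m) // A.card = n}, A ≠ B →
      ∃ W : ℕ → {A : Finset (Fin m) // A.card = n}, W 0 = A ∧ W (2*s+1) = B ∧
        ∀ j < 2*s+1, Disjoint (W j).1 (W (j+1)).1) :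
    Nonempty (subdiv G (2*s+1) →g kneserG m n) := by
  classical
  let KV := {A : Finset (Fin m) // A.card = n}
  let φ : KV → ℕ := fun A => (Fintype.equivFin KV A : ℕ)
  have hφ : Function.Injective φ := fun a b hab => (Fintype.equivFin KV).injective (Fin.ext hab)
  let wk : KV → KV → ℕ → KV := fun A B => if h : A = B then (fun _ => A) else (hwalk A B h).choose
  have wk0 : ∀ A B, A ≠ B → wk A B 0 = A := by
    intro A B h; simp only [wk, dif_neg h]; exact (hwalk A B h).choose_spec.1
  have wkend : ∀ A B, A ≠ B → wk A B (2*s+1) = B := by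
    intro A B h; simp only [wk, dif_neg h]; exact (hwalk A B h).choose_spec.2.1
  have wkdis : ∀ A B, A ≠ B → ∀ j < 2*s+1, Disjoint (wk A B j).1 (wk A B (j+1)).1 := by
    intro A B h; simp only [wk, dif_neg h]; exact (hwalk A B h).choose_spec.2.2
  let g : V × ℕ → V × ℕ → KV := fun x y =>
    if φ (c x.1) < φ (c y.1) then wk (c x.1) (c y.1) x.2
    else if φ (c y.1) < φ (c x.1) then wk (c y.1) (c x.1) y.2
    else c x.1
  have hg : ∀ a b, g a b = g b a := by
    intro a b
    simp only [g]
    rcases lt_trichotomy (φ (c a.1)) (φ (c b.1)) with h | h | h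
    · rw [if_pos h, if_neg (by omega), if_pos h]
    · have hcc : c a.1 = c b.1 := hφ h
      rw [if_neg (by omega), if_neg (by omega), if_neg (by omega), if_neg (by omega), hcc]
    · rw [if_neg (by omega), if_pos h, if_pos h]
  -- value at index 0 is c u
  have g0 : ∀ u v : V, c u ≠ c v → g (u, 0) (v, 2*s+1) = c u := by
    intro u v hcc
    simp only [g]
    rcases lt_trichotomy (φ (c u)) (φ (c v)) with h | h | h
    · rw [if_pos h]; exact wk0 _ _ hcc
    · exact absurd (hφ h) hcc
    · rw [if_neg (by omega), if_pos h]; exact wkend _ _ (Ne.symm hcc)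
  -- main disjointness claim along an edge path
  have claim : ∀ (u v : V) (j : ℕ), G.Adj u v → j + 1 ≤ 2*s+1 →
      Disjoint (g (u, j) (v, 2*s+1-j)).1 (g (u, j+1) (v, 2*s+1-(j+1))).1 := by
    intro u v j hadj hj
    have hcc : c u ≠ c v := hc u v hadj
    simp only [g]
    rcases lt_trichotomy (φ (c u)) (φ (c v)) with h | h | h
    · rw [if_pos h, if_pos h]
      exact wkdis _ _ hcc j (by omega)
    · exact absurd (hφ h) hcc
    · rw [if_neg (by omega), if_pos h, if_neg (by omega), if_pos h]
      have h1 : 2*s+1-j = (2*s+1-(j+1)) + 1 := by omega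
      rw [h1]
      exact (wkdis _ _ (Ne.symm hcc) (2*s+1-(j+1)) (by omega)).symm
  let f : (V ⊕ {p : Sym2 (V × ℕ) // ∃ u v i, G.Adj u v ∧ 0 < i ∧ i < 2*s+1 ∧
      p = Sym2.mk (u, i) (v, 2*s+1 - i)}) → KV :=
    Sum.elim c (fun p => Sym2.lift ⟨g, hg⟩ p.1)
  -- helper for the inl-inr adjacency
  have case2 : ∀ (a : V) (p) (v : V), G.Adj a v → p = Sym2.mk (a, 1) (v, 2*s+1 - 1) →
      Disjoint (c a).1 (Sym2.lift ⟨g, hg⟩ p).1 := by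
    intro a p v hadj hp
    rw [hp, Sym2.lift_mk]
    have hcc := hc a v hadj
    have h0 := g0 a v hcc
    have h1 := claim a v 0 hadj (by omega)
    rw [Nat.sub_zero, h0] at h1
    exact h1
  refine ⟨⟨f, ?_⟩⟩
  rintro (a | p) (b | q) hadj <;>
    rcases hadj with ⟨hne, hr | hr⟩
  · exact absurd hr.1 (by omega)
  · exact absurd hr.1 (by omega)
  · obtain ⟨v, hadj', hq⟩ := hr
    exact adj_of_disjoint hn (case2 a q.1 v hadj' hq)
  · exact hr.elim
  · exact hr.elim
  · obtain ⟨v, hadj', hp⟩ := hr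
    exact (adj_of_disjoint hn (case2 b p.1 v hadj' hp)).symm
  · obtain ⟨u, v, j, hadj', hj0, hj1, hp, hq⟩ := hr
    show (kneserG m n).Adj (Sym2.lift ⟨g, hg⟩ p.1) (Sym2.lift ⟨g, hg⟩ q.1)
    rw [hp, hq, Sym2.lift_mk, Sym2.lift_mk]
    have hfix : 2*s+1-j-1 = 2*s+1-(j+1) := by omega
    rw [hfix]
    exact adj_of_disjoint hn (claim u v j hadj' (by omega))
  · obtain ⟨u, v, j, hadj', hj0, hj1, hq, hp⟩ := hr
    show (kneserG m n).Adj (Sym2.lift ⟨g, hg⟩ p.1) (Sym2.lift ⟨g, hg⟩ q.1)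
    rw [hp, hq, Sym2.lift_mk, Sym2.lift_mk]
    have hfix : 2*s+1-j-1 = 2*s+1-(j+1) := by omega
    rw [hfix]
    exact (adj_of_disjoint hn (claim u v j hadj' (by omega))).symm
def kneserLift {m m' n : ℕ} (h : m ≤ m') : kneserG m n →g kneserG m' n where
  toFun := fun A => ⟨A.1.map (Fin.castLEEmb h), by rw [Finset.card_map]; exact A.2⟩
  map_rel' := by
    intro A B hAB
    rw [kneser_adj_iff] at hAB ⊢
    refine ⟨fun hEq => hAB.1 ?_, by simpa [Finset.disjoint_map] using hAB.2⟩
    apply Subtype.ext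
    have h2 := congrArg Subtype.val hEq
    exact Finset.map_injective _ h2

/-- For a finite non-bipartite graph `G` and positive integers `i, n, s` with `i · s = n - 1`,
`χ_n(G^{1/(2s+1)}) ≤ 2n + i` iff `χ(G) ≤ C(2n+i, n)`. -/
theorem stmt_18 {V : Type*} [Fintype V] (G : SimpleGraph V) (hG : ¬ G.Colorable 2)
    (i n s : ℕ) (hi : 0 < i) (hn : 0 < n) (hs : 0 < s) (h : i * s = n - 1) :
    multiChrom (subdiv G (2 * s + 1)) n ≤ 2 * n + i ↔
      G.chromaticNumber ≤ ((Nat.choose (2 * n + i) n : ℕ) : ℕ∞) := by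
  classical
  have hVne : Nonempty V := by
    by_contra hne
    rw [not_nonempty_iff] at hne
    exact hG (SimpleGraph.Colorable.of_isEmpty (G := G) 2)
  -- general walk existence in subtype form
  have hwalkgen : ∀ m', 2*n ≤ m' → n - 1 ≤ (m' - 2*n) * s →
      ∀ A B : {A : Finset (Fin m') // A.card = n}, A ≠ B →
      ∃ W : ℕ → {A : Finset (Fin m') // A.card = n}, W 0 = A ∧ W (2*s+1) = B ∧
        ∀ j < 2*s+1, Disjoint (W j).1 (W (j+1)).1 := by
    intro m' hm' hbound A B hAB
    have hlt : (A.1 ∩ B.1).card < n := by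
      rcases lt_or_eq_of_le (le_trans (Finset.card_le_card Finset.inter_subset_left) A.2.le)
        with h1 | h1
      · exact h1
      · exfalso
        have h2 : A.1 ∩ B.1 = A.1 :=
          Finset.eq_of_subset_of_card_le Finset.inter_subset_left (by omega)
        have h3 : A.1 ⊆ B.1 := by rw [← h2]; exact Finset.inter_subset_right
        have h4 : A.1 = B.1 :=
          Finset.eq_of_subset_of_card_le h3 (by rw [A.2, B.2])
        exact hAB (Subtype.ext h4)
    obtain ⟨W, hWc, hW0, hWe, hWd⟩ := walk_exists m' n hn hm' s A.1 B.1 A.2 B.2 (by omega)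
    exact ⟨fun j => ⟨W j, hWc j⟩, Subtype.ext hW0, Subtype.ext hWe, hWd⟩
  -- the set is nonempty : membership of m₀
  set i₀ := max (Fintype.card V) n with hi₀
  have hm₀mem : Nonempty (subdiv G (2*s+1) →g kneserG (2*n+i₀) n) := by
    have hcard : Fintype.card V ≤ Fintype.card {A : Finset (Fin (2*n+i₀)) // A.card = n} := by
      rw [Fintype.card_finset_len, Fintype.card_fin]
      have := choose_lb n hn i₀
      omega
    obtain ⟨emb⟩ := Function.Embedding.nonempty_of_card_le hcard
    refine hom_of_colors G (2*n+i₀) n s hn hs emb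
      (fun u v ha he => ha.ne (emb.injective he)) (hwalkgen (2*n+i₀) (by omega) ?_)
    have h1 : 2*n+i₀ - 2*n = i₀ := by omega
    rw [h1]
    calc n - 1 ≤ i₀ := by omega
      _ ≤ i₀ * s := Nat.le_mul_of_pos_right _ hs
  constructor
  · intro hle
    have hmem : multiChrom (subdiv G (2*s+1)) n ∈
        {m : ℕ | Nonempty (subdiv G (2*s+1) →g kneserG m n)} :=
      Nat.sInf_mem ⟨2*n+i₀, hm₀mem⟩
    obtain ⟨F0⟩ := hmem
    let F := (kneserLift (n := n) hle).comp F0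
    let c : V → {A : Finset (Fin (2*n+i)) // A.card = n} := fun v => F (Sum.inl v)
    have hproper : ∀ u v, G.Adj u v → c u ≠ c v := by
      intro u v hadj heq
      let q : ℕ → (V ⊕ {p : Sym2 (V × ℕ) // ∃ u' v' i', G.Adj u' v' ∧ 0 < i' ∧ i' < 2*s+1 ∧
          p = Sym2.mk (u', i') (v', 2*s+1 - i')}) :=
        fun j => if hj : 0 < j ∧ j < 2*s+1 then
            Sum.inr ⟨Sym2.mk (u, j) (v, 2*s+1 - j), u, v, j, hadj, hj.1, hj.2, rfl⟩
          else if j = 0 then Sum.inl u else Sum.inl v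
      have hq0 : q 0 = Sum.inl u := by simp [q]
      have hqend : q (2*s+1) = Sum.inl v := by
        have h1 : ¬ (0 < 2*s+1 ∧ 2*s+1 < 2*s+1) := by omega
        simp [q, h1]
      have hadjq : ∀ j < 2*s+1, (subdiv G (2*s+1)).Adj (q j) (q (j+1)) := by
        intro j hj
        rcases Nat.eq_zero_or_pos j with rfl | hj0
        · -- from inl u to first interior vertex
          have h1 : (0:ℕ) < 1 ∧ 1 < 2*s+1 := by omega
          rw [hq0]
          show (subdiv G (2*s+1)).Adj _ (q 1)
          have hq1 : q 1 = Sum.inr ⟨Sym2.mk (u, 1) (v, 2*s+1 - 1),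
              u, v, 1, hadj, h1.1, h1.2, rfl⟩ := by simp only [q, dif_pos h1]
          rw [hq1]
          exact ⟨by simp, Or.inl ⟨v, hadj, rfl⟩⟩
        · rcases Nat.lt_or_ge (j+1) (2*s+1) with hj1 | hj1
          · have hcj : 0 < j ∧ j < 2*s+1 := ⟨hj0, hj⟩
            have hcj1 : 0 < j+1 ∧ j+1 < 2*s+1 := ⟨by omega, hj1⟩
            have hqj : q j = Sum.inr ⟨Sym2.mk (u, j) (v, 2*s+1 - j),
                u, v, j, hadj, hcj.1, hcj.2, rfl⟩ := by simp only [q, dif_pos hcj]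
            have hqj1 : q (j+1) = Sum.inr ⟨Sym2.mk (u, j+1) (v, 2*s+1 - (j+1)),
                u, v, j+1, hadj, hcj1.1, hcj1.2, rfl⟩ := by simp only [q, dif_pos hcj1]
            rw [hqj, hqj1]
            refine ⟨?_, Or.inl ⟨u, v, j, hadj, hj0, hj1, rfl, ?_⟩⟩
            · intro hEq
              rw [Sum.inr.injEq, Subtype.mk.injEq, Sym2.eq_iff] at hEq
              rcases hEq with ⟨h1, h2⟩ | ⟨h1, h2⟩
              · have h3 := congrArg Prod.snd h1
                simp only [Prod.snd] at h3
                omega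
              · have h3 := congrArg Prod.fst h1
                simp only [Prod.fst] at h3
                exact hadj.ne h3
            · have : 2*s+1 - j - 1 = 2*s+1 - (j+1) := by omega
              rw [this]
          · have hj2s : j = 2*s := by omega
            subst hj2s
            have hcj : 0 < 2*s ∧ 2*s < 2*s+1 := by omega
            have hqj : q (2*s) = Sum.inr ⟨Sym2.mk (u, 2*s) (v, 2*s+1 - 2*s),
                u, v, 2*s, hadj, hcj.1, hcj.2, rfl⟩ := by simp [q, hcj]
            rw [hqj]
            show (subdiv G (2*s+1)).Adj _ (q (2*s+1))
            rw [hqend]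
            refine ⟨by simp, Or.inr ⟨u, hadj.symm, ?_⟩⟩
            show Sym2.mk (u, 2*s) (v, 2*s+1 - 2*s) = Sym2.mk (v, 1) (u, 2*s+1-1)
            have h1 : 2*s+1 - 2*s = 1 := by omega
            have h2 : 2*s+1 - 1 = 2*s := by omega
            rw [h1, h2]
            exact Sym2.eq_swap
      refine no_closed_walk n i s hn h (fun j => (F (q j)).1) (fun j => (F (q j)).2) ?_ ?_
      · intro j hj
        have h1 := F.map_adj (hadjq j hj)
        rw [kneser_adj_iff] at h1
        exact h1.2
      · show (F (q (2*s+1))).1 = (F (q 0)).1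
        rw [hq0, hqend]
        show (c v).1 = (c u).1
        rw [heq]
    let C : G.Coloring {A : Finset (Fin (2*n+i)) // A.card = n} :=
      SimpleGraph.Coloring.mk c (fun {u v} ha => hproper u v ha)
    have hcol := C.colorable.chromaticNumber_le
    rwa [Fintype.card_finset_len, Fintype.card_fin] at hcol
  · intro hχ
    have hcol : G.Colorable ((2*n+i).choose n) := chromaticNumber_le_iff_colorable.1 hχ
    obtain ⟨C0⟩ := hcol
    have hcardKV : Fintype.card {A : Finset (Fin (2*n+i)) // A.card = n} = (2*n+i).choose n := by
      rw [Fintype.card_finset_len, Fintype.card_fin]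
    let e := (Fintype.equivFinOfCardEq hcardKV).symm
    let cc : V → {A : Finset (Fin (2*n+i)) // A.card = n} := fun v => e (C0 v)
    have hcc : ∀ u v, G.Adj u v → cc u ≠ cc v :=
      fun u v ha he => C0.valid ha (e.injective he)
    have hF := hom_of_colors G (2*n+i) n s hn hs cc hcc
      (hwalkgen (2*n+i) (by omega) (by
        have h1 : 2*n+i - 2*n = i := by omega
        rw [h1]
        omega))
    exact Nat.sInf_le hF
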